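/- Given nonnegative reals representing a performance gap Δ_ρ = ρ^{π*,R̄} - max_{π ∈ Π_adm} ρ^{π,R̄} ≥ 0, the relative value Φ of the optimal surrogate solution satisfies the lower bound Φ ≥ (λ + (1-γ)/2) · Δ_ρ. -/

import Mathlib

open scoped BigOperators

/-- A finite Markov decision process with discount factor `γ ∈ [0,1)` and initial
state distribution `init`. -/
structure MDP (S A : Type*) [Fintype S] [Fintype A] where
  P : S → A → S → ℝ
  init : S → ℝ
  γ : ℝ
  P_nonneg : ∀ s a s', 0 ≤ P s a s'
  P_sum : ∀ s a, ∑ s', P s a s' = 1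
  init_nonneg : ∀ s, 0 ≤ init s
  init_sum : ∑ s, init s = 1
  γ_nonneg : 0 ≤ γ
  γ_lt_one : γ < 1

variable {S A : Type*} [Fintype S] [Fintype A]

/-- One-step evolution of a state distribution under policy `π`. -/
def MDP.step (M : MDP S A) (π : S → A) (d : S → ℝ) : S → ℝ :=
  fun s' => ∑ s, d s * M.P s (π s) s'

/-- Distribution of the state `s_{t+1}` when executing `π` from `s_1 ~ init`. -/
def MDP.stateDist (M : MDP S A) (π : S → A) : ℕ → S → ℝ
  | 0 => M.init
  | t + 1 => M.step π (M.stateDist π t)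

/-- Discounted state occupancy measure
`μ^π(s) = E[(1-γ) ∑_{t ≥ 1} γ^{t-1} 1{s_t = s}]`. -/
noncomputable def MDP.occ (M : MDP S A) (π : S → A) (s : S) : ℝ :=
  (1 - M.γ) * ∑' t : ℕ, M.γ ^ t * M.stateDist π t s

/-- The score `ρ^{π,R} = E[(1-γ) ∑_{t ≥ 1} γ^{t-1} R(s_t, a_t)]` of policy `π`. -/
noncomputable def MDP.score (M : MDP S A) (π : S → A) (R : S → A → ℝ) : ℝ :=
  (1 - M.γ) * ∑' t : ℕ, M.γ ^ t * ∑ s, M.stateDist π t s * R s (π s)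

/-- Distribution of the state `t+1` steps after taking action `a0` in state `s0`
and following `π` afterwards. -/
def MDP.stateDistFrom (M : MDP S A) (π : S → A) (s0 : S) (a0 : A) : ℕ → S → ℝ
  | 0 => M.P s0 a0
  | t + 1 => M.step π (M.stateDistFrom π s0 a0 t)

/-- State-action value
`Q^{π,R}(s,a) = E[∑_{t ≥ 1} γ^{t-1} R(s_t,a_t) | s_1 = s, a_1 = a, then follow π]`. -/
noncomputable def MDP.Q (M : MDP S A) (π : S → A) (R : S → A → ℝ) (s : S) (a : A) : ℝ :=
  R s a + ∑' t : ℕ, M.γ ^ (t + 1) * ∑ s', M.stateDistFrom π s a t s' * R s' (π s')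

/-- Euclidean (`L2`) distance between two reward functions. -/
noncomputable def rdist (R R' : S → A → ℝ) : ℝ :=
  Real.sqrt (∑ s, ∑ a, (R s a - R' s a) ^ 2)

/-- The set `OPT^ε_det(R)` of `ε`-optimal deterministic policies under reward `R`. -/
noncomputable def MDP.OPT (M : MDP S A) (R : S → A → ℝ) (ε : ℝ) : Set (S → A) :=
  {π | M.score π R > (⨆ π' : S → A, M.score π' R) - ε}

/-- A pair `(π, R)` is feasible for the surrogate problem P4: `π` is admissible and
every `ε`-optimal policy under `R` agrees with `π` on all states that `π` visits with
positive occupancy. -/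
def feasible4 (M : MDP S A) (ε : ℝ) (Padm : Set (S → A))
    (π : S → A) (R : S → A → ℝ) : Prop :=
  π ∈ Padm ∧ M.OPT R ε ⊆ {π' | ∀ s, 0 < M.occ π s → π' s = π s}

/-- The objective of the surrogate problem P4. -/
noncomputable def objective4 (M : MDP S A) (Rbar : S → A → ℝ) (lam : ℝ)
    (π : S → A) (R : S → A → ℝ) : ℝ :=
  rdist Rbar R - lam * M.score π Rbar

/-! Whatever `R̂₂` is, feasibility alone forces `π₂` to be optimal under `R̂₂`: a maximiser of
`ρ^{·,R̂₂}` is `ε`-optimal, so it agrees with `π₂` wherever `π₂` has positive occupancy, and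
therefore has the same score as `π₂`. Scores are `1`-Lipschitz in the reward for the `L2`
distance, so `ρ^{π*,R̄} - ρ^{π₂,R̄} ≤ 2 ‖R̄ - R̂₂‖₂`, and `Δ_ρ ≤ ρ^{π*,R̄} - ρ^{π₂,R̄}` because
`π₂` is admissible. Since `(1-γ)/2 · 2 ≤ 1`, the bound follows. -/

lemma abs_sub_le_rdist (R R' : S → A → ℝ) (s : S) (a : A) :
    |R s a - R' s a| ≤ rdist R R' := by
  rw [← Real.sqrt_sq_eq_abs]
  refine Real.sqrt_le_sqrt ?_
  calc (R s a - R' s a) ^ 2 ≤ ∑ a', (R s a' - R' s a') ^ 2 :=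
        Finset.single_le_sum (f := fun a' => (R s a' - R' s a') ^ 2)
          (fun _ _ => sq_nonneg _) (Finset.mem_univ a)
    _ ≤ ∑ s', ∑ a', (R s' a' - R' s' a') ^ 2 :=
        Finset.single_le_sum (f := fun s' => ∑ a', (R s' a' - R' s' a') ^ 2)
          (fun _ _ => Finset.sum_nonneg fun _ _ => sq_nonneg _) (Finset.mem_univ s)

namespace MDP

variable (M : MDP S A)

lemma stateDist_nonneg (π : S → A) (t : ℕ) (s : S) : 0 ≤ M.stateDist π t s := by
  induction t generalizing s with
  | zero => exact M.init_nonneg s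
  | succ t ih => exact Finset.sum_nonneg fun s' _ => mul_nonneg (ih s') (M.P_nonneg _ _ _)

lemma sum_stateDist (π : S → A) (t : ℕ) : ∑ s, M.stateDist π t s = 1 := by
  induction t with
  | zero => exact M.init_sum
  | succ t ih =>
    change ∑ s', ∑ s, M.stateDist π t s * M.P s (π s) s' = 1
    rw [Finset.sum_comm]
    simp_rw [← Finset.mul_sum, M.P_sum, mul_one]
    exact ih

lemma stateDist_le_one (π : S → A) (t : ℕ) (s : S) : M.stateDist π t s ≤ 1 :=
  M.sum_stateDist π t ▸
    Finset.single_le_sum (fun s' _ => M.stateDist_nonneg π t s') (Finset.mem_univ s)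

lemma abs_sum_stateDist_mul_le (π : S → A) (t : ℕ) {f : S → ℝ} {C : ℝ}
    (hf : ∀ s, |f s| ≤ C) : |∑ s, M.stateDist π t s * f s| ≤ C :=
  calc |∑ s, M.stateDist π t s * f s|
      ≤ ∑ s, M.stateDist π t s * C := by
        refine (Finset.abs_sum_le_sum_abs _ _).trans (Finset.sum_le_sum fun s _ => ?_)
        rw [abs_mul, abs_of_nonneg (M.stateDist_nonneg π t s)]
        exact mul_le_mul_of_nonneg_left (hf s) (M.stateDist_nonneg π t s)
    _ = C := by rw [← Finset.sum_mul, M.sum_stateDist, one_mul]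

lemma norm_discounted_le {g : ℕ → ℝ} {C : ℝ} (hg : ∀ t, |g t| ≤ C) (t : ℕ) :
    ‖M.γ ^ t * g t‖ ≤ C * M.γ ^ t := by
  rw [Real.norm_eq_abs, abs_mul, abs_of_nonneg (pow_nonneg M.γ_nonneg t), mul_comm]
  exact mul_le_mul_of_nonneg_right (hg t) (pow_nonneg M.γ_nonneg t)

lemma summable_discounted {g : ℕ → ℝ} {C : ℝ} (hg : ∀ t, |g t| ≤ C) :
    Summable fun t => M.γ ^ t * g t :=
  .of_norm_bounded ((summable_geometric_of_lt_one M.γ_nonneg M.γ_lt_one).mul_left C)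
    (M.norm_discounted_le hg)

lemma abs_discounted_tsum_le {g : ℕ → ℝ} {C : ℝ} (hg : ∀ t, |g t| ≤ C) :
    |(1 - M.γ) * ∑' t, M.γ ^ t * g t| ≤ C := by
  have h1γ : 0 < 1 - M.γ := sub_pos.mpr M.γ_lt_one
  have hgeom := (summable_geometric_of_lt_one M.γ_nonneg M.γ_lt_one).mul_left C
  calc |(1 - M.γ) * ∑' t, M.γ ^ t * g t|
      ≤ (1 - M.γ) * ∑' t, C * M.γ ^ t := by
        rw [abs_mul, abs_of_pos h1γ]
        exact mul_le_mul_of_nonneg_left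
          (tsum_of_norm_bounded hgeom.hasSum (M.norm_discounted_le hg)) h1γ.le
    _ = C := by
        rw [tsum_mul_left, tsum_geometric_of_lt_one M.γ_nonneg M.γ_lt_one]
        field_simp

lemma summable_score (π : S → A) (R : S → A → ℝ) :
    Summable fun t => M.γ ^ t * ∑ s, M.stateDist π t s * R s (π s) :=
  M.summable_discounted fun t => M.abs_sum_stateDist_mul_le π t fun s =>
    Finset.single_le_sum (f := fun s => |R s (π s)|) (fun _ _ => abs_nonneg _) (Finset.mem_univ s)

lemma score_sub (π : S → A) (R R' : S → A → ℝ) :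
    M.score π R - M.score π R' = M.score π (R - R') := by
  rw [score, score, ← mul_sub, ← (M.summable_score π R).tsum_sub (M.summable_score π R')]
  simp only [score, Pi.sub_apply, mul_sub, Finset.sum_sub_distrib]

lemma abs_score_le (π : S → A) {R : S → A → ℝ} {C : ℝ} (hR : ∀ s a, |R s a| ≤ C) :
    |M.score π R| ≤ C :=
  M.abs_discounted_tsum_le fun t => M.abs_sum_stateDist_mul_le π t fun s => hR s (π s)

lemma abs_score_sub_score_le_rdist (π : S → A) (R R' : S → A → ℝ) :
    |M.score π R - M.score π R'| ≤ rdist R R' := by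
  rw [score_sub]
  exact M.abs_score_le π fun s a => abs_sub_le_rdist R R' s a

lemma occ_pos_of_pos (π : S → A) {t : ℕ} {s : S} (h : 0 < M.γ ^ t * M.stateDist π t s) :
    0 < M.occ π s := by
  have hsum : Summable fun t => M.γ ^ t * M.stateDist π t s :=
    M.summable_discounted fun t => by
      rw [abs_of_nonneg (M.stateDist_nonneg π t s)]
      exact M.stateDist_le_one π t s
  have hle := hsum.le_tsum t fun j _ =>
    mul_nonneg (pow_nonneg M.γ_nonneg j) (M.stateDist_nonneg π j s)
  exact mul_pos (sub_pos.mpr M.γ_lt_one) (h.trans_le hle)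

variable {M}

section Agree

variable {π π' : S → A} (h : ∀ s, 0 < M.occ π' s → π s = π' s)
include h

lemma discounted_mul_eq_of_agree (t : ℕ) (s : S) (x : A → ℝ) :
    M.γ ^ t * M.stateDist π' t s * x (π s) = M.γ ^ t * M.stateDist π' t s * x (π' s) := by
  rcases (mul_nonneg (pow_nonneg M.γ_nonneg t) (M.stateDist_nonneg π' t s)).eq_or_lt with h0 | hpos
  · rw [← h0, zero_mul, zero_mul]
  · rw [h s (M.occ_pos_of_pos π' hpos)]

lemma discounted_stateDist_eq_of_agree (t : ℕ) (s : S) :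
    M.γ ^ t * M.stateDist π t s = M.γ ^ t * M.stateDist π' t s := by
  induction t generalizing s with
  | zero => rfl
  | succ t ih =>
    have expand : ∀ ρ : S → A, M.γ ^ (t + 1) * M.stateDist ρ (t + 1) s =
        M.γ * ∑ s', M.γ ^ t * M.stateDist ρ t s' * M.P s' (ρ s') s := by
      intro ρ
      change M.γ ^ (t + 1) * ∑ s', M.stateDist ρ t s' * M.P s' (ρ s') s = _
      rw [pow_succ', mul_assoc, Finset.mul_sum]
      simp_rw [← mul_assoc]
    rw [expand π, expand π']
    congr 1
    refine Finset.sum_congr rfl fun s' _ => ?_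
    rw [ih s']
    exact discounted_mul_eq_of_agree h t s' fun a => M.P s' a s

lemma score_eq_of_agree (R : S → A → ℝ) : M.score π R = M.score π' R := by
  unfold score
  congr 1
  refine tsum_congr fun t => ?_
  simp only [Finset.mul_sum, ← mul_assoc, discounted_stateDist_eq_of_agree h t]
  exact Finset.sum_congr rfl fun s _ => discounted_mul_eq_of_agree h t s (R s)

end Agree

lemma mem_OPT_of_forall_score_le {ε : ℝ} (hε : 0 < ε) {R : S → A → ℝ} {π : S → A}
    (hmax : ∀ π', M.score π' R ≤ M.score π R) : π ∈ M.OPT R ε := by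
  have : Nonempty (S → A) := ⟨π⟩
  change M.score π R > (⨆ π', M.score π' R) - ε
  linarith [ciSup_le hmax]

lemma score_le_of_OPT_subset {ε : ℝ} (hε : 0 < ε) {R : S → A → ℝ} {π : S → A}
    (hOPT : M.OPT R ε ⊆ {π' | ∀ s, 0 < M.occ π s → π' s = π s}) (π' : S → A) :
    M.score π' R ≤ M.score π R := by
  have : Nonempty (S → A) := ⟨π⟩
  obtain ⟨πmax, hπmax⟩ := Finite.exists_max fun ρ : S → A => M.score ρ R
  rw [← score_eq_of_agree (hOPT (mem_OPT_of_forall_score_le hε hπmax)) R]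
  exact hπmax π'

lemma score_sub_score_le_two_mul_rdist {R R' : S → A → ℝ} {π π' : S → A}
    (hopt : M.score π R' ≤ M.score π' R') :
    M.score π R - M.score π' R ≤ 2 * rdist R R' := by
  have h := abs_le.mp (M.abs_score_sub_score_le_rdist π R R')
  have h' := abs_le.mp (M.abs_score_sub_score_le_rdist π' R R')
  linarith [h.2, h'.1]

end MDP

theorem stmt14_general (M : MDP S A) (Rbar : S → A → ℝ)
    (ε lam : ℝ) (hε : 0 < ε) (hlam : 0 ≤ lam)
    (Padm : Set (S → A))
    (πst : S → A) (hopt : ∀ π : S → A, M.score π Rbar ≤ M.score πst Rbar)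
    (π₂ : S → A) (R₂ : S → A → ℝ)
    (hfeas : feasible4 M ε Padm π₂ R₂) :
    (lam + (1 - M.γ) / 2) *
        (M.score πst Rbar - (⨆ π : Padm, M.score π.1 Rbar)) ≤
      rdist Rbar R₂ + lam * (M.score πst Rbar - M.score π₂ Rbar) := by
  obtain ⟨hadm, hOPT⟩ := hfeas
  have : Nonempty Padm := ⟨⟨π₂, hadm⟩⟩
  set Δ := M.score πst Rbar - ⨆ π : Padm, M.score π.1 Rbar
  set D := M.score πst Rbar - M.score π₂ Rbar
  have hD : D ≤ 2 * rdist Rbar R₂ :=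
    M.score_sub_score_le_two_mul_rdist (M.score_le_of_OPT_subset hε hOPT πst)
  have hΔ_nonneg : 0 ≤ Δ := sub_nonneg.mpr (ciSup_le fun π => hopt π.1)
  have hΔ_le : Δ ≤ D :=
    sub_le_sub_left (le_ciSup (Set.finite_range _).bddAbove (⟨π₂, hadm⟩ : Padm)) _
  have hr : 0 ≤ rdist Rbar R₂ := Real.sqrt_nonneg _
  calc (lam + (1 - M.γ) / 2) * Δ
      ≤ lam * D + (1 - M.γ) / 2 * (2 * rdist Rbar R₂) := by
        rw [add_mul]
        gcongr
        · linarith [M.γ_lt_one]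
        · exact hΔ_le.trans hD
    _ ≤ rdist Rbar R₂ + lam * D := by nlinarith [M.γ_nonneg]

/-- Lower bound of Theorem 5. If `(π₂, R̂₂)` optimally solves the
surrogate problem P4 and `Δ_ρ = ρ^{π*,R̄} - max_{π ∈ Π_adm} ρ^{π,R̄} ≥ 0`, then the
relative value `Φ = ‖R̄ - R̂₂‖₂ + λ (ρ^{π*,R̄} - ρ^{π₂,R̄})` satisfies
`Φ ≥ (λ + (1-γ)/2) · Δ_ρ`. -/
theorem stmt14 [DecidableEq S] [Nonempty A] (M : MDP S A) (Rbar : S → A → ℝ)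
    (ε lam : ℝ) (hε : 0 < ε) (hlam : 0 ≤ lam)
    (Padm : Set (S → A)) (hne : Padm.Nonempty)
    (πst : S → A) (hopt : ∀ π : S → A, M.score π Rbar ≤ M.score πst Rbar)
    (π₂ : S → A) (R₂ : S → A → ℝ)
    (hfeas : feasible4 M ε Padm π₂ R₂)
    (hbest : ∀ (π : S → A) (R : S → A → ℝ), feasible4 M ε Padm π R →
      objective4 M Rbar lam π₂ R₂ ≤ objective4 M Rbar lam π R) :
    (lam + (1 - M.γ) / 2) *
        (M.score πst Rbar - (⨆ π : Padm, M.score π.1 Rbar)) ≤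
      rdist Rbar R₂ + lam * (M.score πst Rbar - M.score π₂ Rbar) :=
  stmt14_general M Rbar ε lam hε hlam Padm πst hopt π₂ R₂ hfeas
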